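/- arXiv:2304.14868 — 2 statements merged into one kernel-verified Lean document; each statement's English description precedes it below -/
import Mathlib

section
/- Let D be a k-hyperarc-connected directed hypergraph with a fixed vertex r. If X, Y ⊆ V − r are crossing sets with d⁻(X) = k and d⁺(Y) = k, then d⁻(X − Y) = k and d⁺(Y − X) = k. -/
/-- In-degree of a vertex set in a directed hypergraph. -/
def dIn {V : Type*} [DecidableEq V] (A : Multiset (Finset V × V)) (X : Finset V) : ℕ :=
  Multiset.countP (fun a => a.2 ∈ X ∧ (a.1 \ X).Nonempty) A

/-- Out-degree of a vertex set in a directed hypergraph. -/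
def dOut {V : Type*} [DecidableEq V] (A : Multiset (Finset V × V)) (X : Finset V) : ℕ :=
  Multiset.countP (fun a => a.2 ∉ X ∧ (a.1 ∩ X).Nonempty) A

/-- Degree of a vertex set in an undirected hypergraph. -/
def degH {V : Type*} [DecidableEq V] (E : Multiset (Finset V)) (X : Finset V) : ℕ :=
  Multiset.countP (fun Z => (Z ∩ X).Nonempty ∧ (Z \ X).Nonempty) E

/-- `P` is a partition of the vertex set into nonempty parts. -/
def IsPartition {V : Type*} [Fintype V] [DecidableEq V] (P : Finset (Finset V)) : Prop :=
  (∀ X ∈ P, X.Nonempty) ∧ (P : Set (Finset V)).PairwiseDisjoint id ∧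
    P.biUnion id = Finset.univ

/-- Number of hyperedges intersecting at least two members of `P`. -/
def ePart {V : Type*} [DecidableEq V] (E : Multiset (Finset V)) (P : Finset (Finset V)) : ℕ :=
  Multiset.countP (fun Z => 1 < (P.filter (fun X => (Z ∩ X).Nonempty)).card) E

/-- `A` is an orientation of the hypergraph `E`: each hyperedge `X` gets a head `v ∈ X`,
producing the hyperarc `(X − v, v)`. -/
def IsOrientation {V : Type*} [DecidableEq V] (E : Multiset (Finset V))
    (A : Multiset (Finset V × V)) : Prop :=
  A.map (fun a => insert a.2 a.1) = E ∧ ∀ a ∈ A, a.2 ∉ a.1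

/-- `L` is an `(s,t)`-hyperpath in the directed hypergraph `A`. -/
def IsHyperpath {V : Type*} [DecidableEq V] (A : Multiset (Finset V × V)) (s t : V)
    (L : List (Finset V × V)) : Prop :=
  L ≠ [] ∧ (∀ a ∈ L, a ∈ A) ∧ (∀ a ∈ L.head?, s ∈ a.1) ∧ (∀ a ∈ L.getLast?, t = a.2) ∧
    L.Chain' (fun a b => a.2 ∈ b.1) ∧ (L.map Prod.snd).Nodup


section AuxSubmod
variable {V : Type*} [Fintype V] [DecidableEq V]

set_option linter.unusedSectionVars false

lemma countP_add_le {α : Type*} (s : Multiset α) (p q p' q' : α → Prop)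
    [DecidablePred p] [DecidablePred q] [DecidablePred p'] [DecidablePred q']
    (h : ∀ a, (if p' a then 1 else 0) + (if q' a then 1 else 0)
        ≤ (if p a then 1 else 0) + (if q a then (1:ℕ) else 0)) :
    s.countP p' + s.countP q' ≤ s.countP p + s.countP q := by
  induction s using Multiset.induction with
  | empty => simp
  | cons a s ih =>
      simp only [Multiset.countP_cons]
      have := h a
      omega

lemma dIn_submod (A : Multiset (Finset V × V)) (X Y : Finset V) :
    dIn A (X ∩ Y) + dIn A (X ∪ Y) ≤ dIn A X + dIn A Y := by
  apply countP_add_le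
  rintro ⟨Z, v⟩
  by_cases hvX : v ∈ X <;> by_cases hvY : v ∈ Y <;>
    simp only [hvX, hvY, Finset.mem_inter, Finset.mem_union, true_and, false_and, and_false,
      and_true, or_self, if_false, if_true, true_or, or_true, not_true, not_false_iff] <;>
    [skip; skip; skip; simp]
  · by_cases h1 : (Z \ (X ∩ Y)).Nonempty <;> by_cases h2 : (Z \ (X ∪ Y)).Nonempty <;>
      simp only [h1, h2, if_true, if_false]
    · obtain ⟨z, hz⟩ := h2
      simp only [Finset.mem_sdiff, Finset.mem_union] at hz
      have hx : (Z \ X).Nonempty := ⟨z, Finset.mem_sdiff.2 ⟨hz.1, fun h => hz.2 (Or.inl h)⟩⟩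
      have hy : (Z \ Y).Nonempty := ⟨z, Finset.mem_sdiff.2 ⟨hz.1, fun h => hz.2 (Or.inr h)⟩⟩
      simp [hx, hy]
    · obtain ⟨z, hz⟩ := h1
      simp only [Finset.mem_sdiff, Finset.mem_inter, not_and] at hz
      by_cases hzx : z ∈ X
      · have hy : (Z \ Y).Nonempty := ⟨z, Finset.mem_sdiff.2 ⟨hz.1, hz.2 hzx⟩⟩
        simp [hy]
      · have hx : (Z \ X).Nonempty := ⟨z, Finset.mem_sdiff.2 ⟨hz.1, hzx⟩⟩
        simp [hx]
    · exact absurd (h2.mono (Finset.sdiff_subset_sdiff (subset_refl Z)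
        Finset.inter_subset_union)) h1
    · omega
  · by_cases h2 : (Z \ (X ∪ Y)).Nonempty <;> simp only [h2, if_true, if_false]
    · obtain ⟨z, hz⟩ := h2
      simp only [Finset.mem_sdiff, Finset.mem_union] at hz
      have hx : (Z \ X).Nonempty := ⟨z, Finset.mem_sdiff.2 ⟨hz.1, fun h => hz.2 (Or.inl h)⟩⟩
      simp [hx]
    · omega
  · by_cases h2 : (Z \ (X ∪ Y)).Nonempty <;> simp only [h2, if_true, if_false]
    · obtain ⟨z, hz⟩ := h2
      simp only [Finset.mem_sdiff, Finset.mem_union] at hz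
      have hy : (Z \ Y).Nonempty := ⟨z, Finset.mem_sdiff.2 ⟨hz.1, fun h => hz.2 (Or.inr h)⟩⟩
      simp [hy]
    · omega

lemma dOut_eq_dIn (A : Multiset (Finset V × V)) (Y : Finset V) :
    Multiset.countP (fun a : Finset V × V => a.2 ∉ Y ∧ (a.1 ∩ Y).Nonempty) A
      = dIn A (Finset.univ \ Y) := by
  apply Multiset.countP_congr rfl
  rintro ⟨Z, v⟩ _
  have : Z \ (Finset.univ \ Y) = Z ∩ Y := by
    ext z
    simp only [Finset.mem_sdiff, Finset.mem_inter, Finset.mem_univ, true_and, not_not]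
  simp [this, Finset.mem_sdiff]

end AuxSubmod


/-- In a k-hyperarc-connected directed hypergraph, if `X` is in-tight and
`Y` is out-tight and they cross, then `X − Y` is in-tight and `Y − X` is out-tight. -/
theorem crossing_inTight_outTight_diff
    {V : Type*} [Fintype V] [DecidableEq V] (A : Multiset (Finset V × V)) (k : ℕ) (r : V)
    (hconn : ∀ W : Finset V, W.Nonempty → W ≠ Finset.univ → k ≤ dIn A W)
    (X Y : Finset V)
    (hX : X ⊆ Finset.univ \ {r}) (hY : Y ⊆ Finset.univ \ {r})
    (hXY : (X ∩ Y).Nonempty) (hXuY : X ∪ Y ≠ Finset.univ)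
    (hXdY : (X \ Y).Nonempty) (hYdX : (Y \ X).Nonempty)
    (hdX : dIn A X = k) (hdY : dOut A Y = k) :
    dIn A (X \ Y) = k ∧ dOut A (Y \ X) = k := by
  have hrX : r ∉ X := fun h => by simpa using (hX h)
  have hrY : r ∉ Y := fun h => by simpa using (hY h)
  have e1 : X ∩ (Finset.univ \ Y) = X \ Y := by
    ext z; simp [Finset.mem_sdiff]
  have e2 : X ∪ (Finset.univ \ Y) = Finset.univ \ (Y \ X) := by
    ext z; simp [Finset.mem_sdiff]; tauto
  have hsub := dIn_submod A X (Finset.univ \ Y)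
  rw [e1, e2] at hsub
  have hdY' : dIn A (Finset.univ \ Y) = k := by
    rw [← dOut_eq_dIn]; exact hdY
  have h1 : k ≤ dIn A (X \ Y) := by
    refine hconn _ hXdY fun h => ?_
    have : r ∈ X \ Y := h ▸ Finset.mem_univ r
    exact hrX (Finset.mem_sdiff.1 this).1
  have h2 : k ≤ dIn A (Finset.univ \ (Y \ X)) := by
    refine hconn _ ⟨r, Finset.mem_sdiff.2 ⟨Finset.mem_univ r,
      fun h => hrY (Finset.mem_sdiff.1 h).1⟩⟩ fun h => ?_
    obtain ⟨y, hy⟩ := hYdX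
    have : y ∈ Finset.univ \ (Y \ X) := by rw [h]; exact Finset.mem_univ y
    exact (Finset.mem_sdiff.1 this).2 hy
  rw [hdX, hdY'] at hsub
  have g1 : dIn A (X \ Y) = k := by omega
  have g2 : dIn A (Finset.univ \ (Y \ X)) = k := by omega
  refine ⟨g1, ?_⟩
  rw [dOut, dOut_eq_dIn]; exact g2
end

section
/- Let D = (V, A) be a directed hypergraph and construct the directed graph G as follows: the vertex set of G is V ∪ {w_a : a ∈ A}, and for each hyperarc a = (X, v) ∈ A, G contains the arc from w_a to v and, for each x ∈ X, |A|+1 parallel arcs from x to w_a. Then for any s, t ∈ V, the unique minimal minimum out-degree (s,t)-separator S in D equals V intersected with the unique minimal minimum out-degree (s,t)-separator of G. -/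
/-- Out-degree of a vertex set in an indexed directed hypergraph. -/
def dOutIdx {V : Type*} [DecidableEq V] {ι : Type*} [Fintype ι]
    (arcs : ι → Finset V × V) (X : Finset V) : ℕ :=
  (Finset.univ.filter (fun i => (arcs i).2 ∉ X ∧ ((arcs i).1 ∩ X).Nonempty)).card

/-- Out-degree of a vertex set in a directed multigraph given by a multiset of arcs. -/
def dOutG {W : Type*} [DecidableEq W] (G : Multiset (W × W)) (X : Finset W) : ℕ :=
  Multiset.countP (fun e => e.1 ∈ X ∧ e.2 ∉ X) G


lemma countP_bind' {α β : Type*} (p : β → Prop) [DecidablePred p]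
    (s : Multiset α) (f : α → Multiset β) :
    Multiset.countP p (s.bind f) = (s.map (fun a => Multiset.countP p (f a))).sum := by
  induction s using Multiset.induction_on with
  | empty => simp
  | cons a s ih => simp [Multiset.cons_bind, Multiset.countP_add, ih]

section
variable {V : Type*} [Fintype V] [DecidableEq V] {ι : Type*} [Fintype ι] [DecidableEq ι]
variable (arcs : ι → Finset V × V)

/-- The cut side in the bipartite digraph associated to a separator `X`. -/
def liftSet (X : Finset V) : Finset (V ⊕ ι) :=
  X.image Sum.inl ∪ (Finset.univ.filter (fun i => ((arcs i).1 ∩ X).Nonempty)).image Sum.inr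

lemma mem_liftSet_inl (X : Finset V) (v : V) : Sum.inl v ∈ liftSet arcs X ↔ v ∈ X := by
  simp [liftSet]

lemma mem_liftSet_inr (X : Finset V) (i : ι) :
    Sum.inr i ∈ liftSet arcs X ↔ ((arcs i).1 ∩ X).Nonempty := by
  simp [liftSet]

variable (G : Multiset ((V ⊕ ι) × (V ⊕ ι)))
variable (hG : G = Finset.univ.val.bind (fun i : ι =>
      (Sum.inr i, Sum.inl (arcs i).2) ::ₘ
        (Fintype.card ι + 1) • ((arcs i).1.val.map (fun x => (Sum.inl x, Sum.inr i)))))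

include hG in
lemma dOutG_formula (X' : Finset (V ⊕ ι)) :
    dOutG G X' = ∑ i : ι,
      ((if Sum.inr i ∈ X' ∧ Sum.inl (arcs i).2 ∉ X' then 1 else 0) +
        (Fintype.card ι + 1) *
          ((arcs i).1.filter (fun x => Sum.inl x ∈ X' ∧ Sum.inr i ∉ X')).card) := by
  rw [dOutG, hG, countP_bind']
  rw [show ((Finset.univ.val : Multiset ι).map _).sum = ∑ i : ι, Multiset.countP
      (fun e : (V ⊕ ι) × (V ⊕ ι) => e.1 ∈ X' ∧ e.2 ∉ X')
      ((Sum.inr i, Sum.inl (arcs i).2) ::ₘ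
        (Fintype.card ι + 1) • ((arcs i).1.val.map (fun x => (Sum.inl x, Sum.inr i))))
    from rfl]
  refine Finset.sum_congr rfl fun i _ => ?_
  rw [Multiset.countP_cons, Multiset.countP_nsmul, Multiset.countP_map]
  simp only [Finset.card, Finset.filter]
  ring

include hG in
lemma dOutG_liftSet (X : Finset V) : dOutG G (liftSet arcs X) = dOutIdx arcs X := by
  rw [dOutG_formula arcs G hG]
  have h0 : ∀ i : ι,
      ((arcs i).1.filter (fun x => Sum.inl x ∈ liftSet arcs X ∧
        Sum.inr i ∉ liftSet arcs X)).card = 0 := by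
    intro i
    rw [Finset.card_eq_zero, Finset.filter_eq_empty_iff]
    intro x hx
    rw [mem_liftSet_inl, mem_liftSet_inr]
    rintro ⟨hxX, hni⟩
    exact hni ⟨x, Finset.mem_inter.2 ⟨hx, hxX⟩⟩
  simp only [h0, Nat.mul_zero, Nat.add_zero]
  rw [dOutIdx, Finset.card_filter]
  refine Finset.sum_congr rfl fun i _ => ?_
  refine if_congr ?_ rfl rfl
  rw [mem_liftSet_inr, mem_liftSet_inl, and_comm]

end

/-- The minimal minimum out-degree `(s,t)`-separator of a directed hypergraph
equals `V` intersected with the minimal minimum out-degree `(s,t)`-separator of the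
associated bipartite incidence digraph. -/
theorem minimal_separator_reduction
    {V : Type*} [Fintype V] [DecidableEq V] {ι : Type*} [Fintype ι] [DecidableEq ι]
    (arcs : ι → Finset V × V) (htails : ∀ i, (arcs i).1.Nonempty)
    (s t : V)
    (G : Multiset ((V ⊕ ι) × (V ⊕ ι)))
    (hG : G = Finset.univ.val.bind (fun i : ι =>
      (Sum.inr i, Sum.inl (arcs i).2) ::ₘ
        (Fintype.card ι + 1) • ((arcs i).1.val.map (fun x => (Sum.inl x, Sum.inr i)))))
    (S : Finset V)
    (hSsep : s ∈ S ∧ t ∉ S)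
    (hSmin : ∀ X : Finset V, s ∈ X → t ∉ X → dOutIdx arcs S ≤ dOutIdx arcs X)
    (hSsmall : ∀ X : Finset V, s ∈ X → t ∉ X → dOutIdx arcs X = dOutIdx arcs S → S ⊆ X)
    (S' : Finset (V ⊕ ι))
    (hS'sep : Sum.inl s ∈ S' ∧ Sum.inl t ∉ S')
    (hS'min : ∀ X : Finset (V ⊕ ι), Sum.inl s ∈ X → Sum.inl t ∉ X → dOutG G S' ≤ dOutG G X)
    (hS'small : ∀ X : Finset (V ⊕ ι), Sum.inl s ∈ X → Sum.inl t ∉ X →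
      dOutG G X = dOutG G S' → S' ⊆ X) :
    ∀ v : V, v ∈ S ↔ Sum.inl v ∈ S' := by
  classical
  have hA : ∀ Y : Finset V, dOutG G (liftSet arcs Y) = dOutIdx arcs Y :=
    fun Y => dOutG_liftSet arcs G hG Y
  have hcard : ∀ Y : Finset V, dOutIdx arcs Y ≤ Fintype.card ι := fun Y =>
    le_trans (Finset.card_filter_le _ _) (le_of_eq Finset.card_univ)
  set X : Finset V := Finset.univ.filter (fun v => Sum.inl v ∈ S') with hX
  have hmemX : ∀ v, v ∈ X ↔ Sum.inl v ∈ S' := by intro v; simp [hX]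
  have hsX : s ∈ X := (hmemX s).2 hS'sep.1
  have htX : t ∉ X := fun h => hS'sep.2 ((hmemX t).1 h)
  have hls : Sum.inl s ∈ liftSet arcs S := (mem_liftSet_inl arcs S s).2 hSsep.1
  have hlt : Sum.inl t ∉ liftSet arcs S := fun h => hSsep.2 ((mem_liftSet_inl arcs S t).1 h)
  have h1 : dOutG G S' ≤ dOutIdx arcs S := by
    have := hS'min (liftSet arcs S) hls hlt
    rwa [hA] at this
  have h2 : dOutG G S' ≤ Fintype.card ι := h1.trans (hcard S)
  have hC : ∀ i, ((arcs i).1 ∩ X).Nonempty → Sum.inr i ∈ S' := by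
    intro i hne
    by_contra hni
    obtain ⟨x, hx⟩ := hne
    rw [Finset.mem_inter] at hx
    have hcard1 : 1 ≤ ((arcs i).1.filter (fun x => Sum.inl x ∈ S' ∧ Sum.inr i ∉ S')).card :=
      Finset.card_pos.2 ⟨x, Finset.mem_filter.2 ⟨hx.1, (hmemX x).1 hx.2, hni⟩⟩
    have hterm : Fintype.card ι + 1 ≤
        (if Sum.inr i ∈ S' ∧ Sum.inl (arcs i).2 ∉ S' then 1 else 0) +
          (Fintype.card ι + 1) *
            ((arcs i).1.filter (fun x => Sum.inl x ∈ S' ∧ Sum.inr i ∉ S')).card := by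
      have := Nat.mul_le_mul_left (Fintype.card ι + 1) hcard1
      omega
    have hsum : (if Sum.inr i ∈ S' ∧ Sum.inl (arcs i).2 ∉ S' then 1 else 0) +
        (Fintype.card ι + 1) *
          ((arcs i).1.filter (fun x => Sum.inl x ∈ S' ∧ Sum.inr i ∉ S')).card ≤ dOutG G S' := by
      rw [dOutG_formula arcs G hG]
      exact Finset.single_le_sum (f := fun i : ι =>
        (if Sum.inr i ∈ S' ∧ Sum.inl (arcs i).2 ∉ S' then 1 else 0) +
          (Fintype.card ι + 1) *
            ((arcs i).1.filter (fun x => Sum.inl x ∈ S' ∧ Sum.inr i ∉ S')).card)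
        (fun j _ => Nat.zero_le _) (Finset.mem_univ i)
    omega
  have hB : dOutIdx arcs X ≤ dOutG G S' := by
    rw [dOutG_formula arcs G hG, dOutIdx, Finset.card_filter]
    refine Finset.sum_le_sum fun i _ => ?_
    by_cases h : (arcs i).2 ∉ X ∧ ((arcs i).1 ∩ X).Nonempty
    · rw [if_pos h, if_pos ⟨hC i h.2, fun hm => h.1 ((hmemX _).2 hm)⟩]
      exact Nat.le_add_right 1 _
    · rw [if_neg h]
      exact Nat.zero_le _
  have hSX := hSmin X hsX htX
  have heqX : dOutIdx arcs X = dOutIdx arcs S := le_antisymm (hB.trans h1) hSX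
  have heqG : dOutG G S' = dOutIdx arcs S := le_antisymm h1 (hSX.trans hB)
  have hsub1 : S ⊆ X := hSsmall X hsX htX heqX
  have hsub2 : S' ⊆ liftSet arcs S := hS'small _ hls hlt (by rw [hA]; exact heqG.symm)
  intro v
  constructor
  · intro hv; exact (hmemX v).1 (hsub1 hv)
  · intro hv; exact (mem_liftSet_inl arcs S v).1 (hsub2 hv)
end
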